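/- For integers 0 < j < m and an integer l ≥ 3, the function θ_l(r) = (r²(j+γ_l) − j)/(r²(1−r²)), with γ_l = (l−2)(m−j+l−1), is strictly increasing on the interval (0,1). -/

import Mathlib

/-! With `s = r ^ 2` the function is `(s * (j + γ) - j) / (s * (1 - s))`, and for `s < t` in `(0, 1)`
the cross-multiplied difference of its values factors as `(t - s) * (γ * s * t + j * (1 - s) * (1 - t))`,
which is positive once `γ ≥ 0`. -/

open Set

theorem strictMonoOn_div_mul_one_sub {a c : ℝ} (ha : 0 ≤ a) (hc : 0 < c) :
    StrictMonoOn (fun s : ℝ => (s * (c + a) - c) / (s * (1 - s))) (Ioo 0 1) := by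
  rintro s ⟨hs0, hs1⟩ t ⟨ht0, ht1⟩ hst
  rw [div_lt_div_iff₀ (mul_pos hs0 (sub_pos.2 hs1)) (mul_pos ht0 (sub_pos.2 ht1))]
  have hcross : 0 < (t - s) * (a * s * t + c * (1 - s) * (1 - t)) :=
    mul_pos (sub_pos.2 hst) (add_pos_of_nonneg_of_pos (by positivity)
      (mul_pos (mul_pos hc (sub_pos.2 hs1)) (sub_pos.2 ht1)))
  linear_combination hcross

theorem sq_mapsTo_Ioo_zero_one : MapsTo (fun r : ℝ => r ^ 2) (Ioo 0 1) (Ioo 0 1) :=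
  fun r ⟨hr0, hr1⟩ => ⟨by positivity, pow_lt_one₀ hr0.le hr1 two_ne_zero⟩

theorem stmt_9 (j m l : ℕ) (hj : 0 < j) (hm : j < m) (hl : 3 ≤ l)
    (γ : ℝ) (hγ : γ = ((l : ℝ) - 2) * ((m : ℝ) - j + l - 1)) :
    StrictMonoOn (fun r : ℝ => (r ^ 2 * ((j : ℝ) + γ) - j) / (r ^ 2 * (1 - r ^ 2)))
      (Set.Ioo (0 : ℝ) 1) := by
  have hl' : (3 : ℝ) ≤ l := by exact_mod_cast hl
  have hm' : (j : ℝ) + 1 ≤ m := by exact_mod_cast hm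
  have hγ0 : 0 ≤ γ := hγ ▸ mul_nonneg (by linarith) (by linarith)
  have hsq : StrictMonoOn (fun r : ℝ => r ^ 2) (Ioo 0 1) :=
    (pow_left_strictMonoOn₀ two_ne_zero).mono fun _ hr => le_of_lt hr.1
  exact (strictMonoOn_div_mul_one_sub hγ0 (Nat.cast_pos.2 hj)).comp hsq sq_mapsTo_Ioo_zero_one
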